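/- Let x∼y be an edge of G with d_x ≥ d_y. Then κ_0(x,y) ≤ κ(x,y) ≤ κ_0(x,y) + 2/d_x. -/

import Mathlib

/-!
Write `g(p) = (W₁(μ_x^p, μ_y^p) - p) / (1 - p)`, so that `κ_p / (1 - p) = 1 - g(p)`.
Scaling an optimal plan for idleness `p'` by `(1 - p) / (1 - p')` and putting the missing mass on
`(x, y)` gives `g(p) ≤ g(p')` whenever `p ≥ 1/2`. Hence `g` is constant on `[1/2, 1)`, so
`κ = 1 - g(1/2)`, and `κ₀ = 1 - g(0) ≤ κ`.

For the upper bound take an optimal plan `π` for `p = 1/2` in which no common neighbour of `x` and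
`y` sends mass to `y`: among optimal plans minimise that mass; if it were positive, a rerouting
along one or two unit cycles (this is where `d_y ≤ d_x` enters) would lower it without raising the
cost. Deleting row `x` and column `y` of `π` and merging the transfers `u → y` and `x → v` into
`u → v` through their independent coupling gives a plan for `p = 0`. As `u` is not adjacent to
`y`, `d(u, v) ≤ d(u, y) + d(x, v) - 1` except for `u = y`, so the merged transfers save the edge
`x ∼ y` up to an error `2 π(y, y) ≤ 2 (1 - p) / d_x`; this yields
`W₁(μ_x^0, μ_y^0) ≤ g(1/2) + 2 / d_x`.
-/

open scoped Classical

noncomputable def mu {V : Type*} (G : SimpleGraph V) [G.LocallyFinite] (x : V) (p : ℝ) :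
    V → ℝ :=
  fun z => if z = x then p else if G.Adj x z then (1 - p) / (G.degree x) else 0

def IsPlan {V : Type*} (π : V × V → ℝ) (μ1 μ2 : V → ℝ) : Prop :=
  (∀ q, π q ∈ Set.Icc (0 : ℝ) 1) ∧ (Function.support π).Finite ∧
    (∀ u, ∑ᶠ v, π (u, v) = μ1 u) ∧ (∀ v, ∑ᶠ u, π (u, v) = μ2 v)

noncomputable def cost {V : Type*} (G : SimpleGraph V) (π : V × V → ℝ) : ℝ :=
  ∑ᶠ q : V × V, (G.dist q.1 q.2 : ℝ) * π q

noncomputable def W1 {V : Type*} (G : SimpleGraph V) (μ1 μ2 : V → ℝ) : ℝ :=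
  sInf (cost G '' {π | IsPlan π μ1 μ2})

noncomputable def kappa {V : Type*} (G : SimpleGraph V) [G.LocallyFinite]
    (p : ℝ) (x y : V) : ℝ :=
  1 - W1 G (mu G x p) (mu G y p)

def IsLip {V : Type*} (G : SimpleGraph V) (φ : V → ℝ) : Prop :=
  ∀ u v, |φ u - φ v| ≤ (G.dist u v : ℝ)

noncomputable def Fpot {V : Type*} (G : SimpleGraph V) [G.LocallyFinite]
    (x y : V) (φ : V → ℝ) : ℝ :=
  (G.degree y : ℝ) * ∑ z ∈ (G.neighborFinset x).erase y, φ z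
    - (G.degree x : ℝ) * ∑ z ∈ (G.neighborFinset y).erase x, φ z

noncomputable def cIdle {V : Type*} (G : SimpleGraph V) [G.LocallyFinite]
    (x y : V) (j : ℤ) : ℝ :=
  sSup (Fpot G x y ''
    {φ | IsLip G φ ∧ (∀ w, ∃ n : ℤ, φ w = (n : ℝ)) ∧ φ x = (j : ℝ) ∧ φ y = 0})

noncomputable def fIdle {V : Type*} (G : SimpleGraph V) [G.LocallyFinite]
    (x y : V) (j : ℤ) (p : ℝ) : ℝ :=
  (p - (1 - p) / (G.degree y : ℝ)) * (j : ℝ)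
    + ((1 - p) / ((G.degree x : ℝ) * (G.degree y : ℝ))) * cIdle G x y j

def IsFinProb {V : Type*} (μ : V → ℝ) : Prop :=
  (∀ v, 0 ≤ μ v) ∧ (Function.support μ).Finite ∧ ∑ᶠ v, μ v = 1


open Function Finset

namespace SimpleGraph

variable {V : Type*} (G : SimpleGraph V) [G.LocallyFinite]

noncomputable def closedNeighborFinset (x : V) : Finset V := insert x (G.neighborFinset x)

variable {G}

lemma mem_closedNeighborFinset {x z : V} :
    z ∈ G.closedNeighborFinset x ↔ z = x ∨ G.Adj x z := by
  simp [closedNeighborFinset]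

lemma self_mem_closedNeighborFinset (x : V) : x ∈ G.closedNeighborFinset x :=
  mem_insert_self _ _

lemma mem_closedNeighborFinset_of_adj {x z : V} (h : G.Adj x z) : z ∈ G.closedNeighborFinset x :=
  mem_closedNeighborFinset.mpr (Or.inr h)

end SimpleGraph

open SimpleGraph

section Measures

variable {V : Type*} (G : SimpleGraph V) [G.LocallyFinite] {x z : V} {p : ℝ}

lemma mu_apply_self (x : V) (p : ℝ) : mu G x p x = p := by simp [mu]

lemma mu_apply_of_adj (p : ℝ) (h : G.Adj x z) : mu G x p z = (1 - p) / G.degree x := by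
  simp [mu, h.ne', h]

lemma mu_apply_of_ne (p : ℝ) (h : z ≠ x) : mu G x p z = (1 - p) * mu G x 0 z := by
  by_cases hxz : G.Adj x z <;> simp [mu, h, hxz, div_eq_mul_inv]

lemma mu_eq_zero_of_notMem (p : ℝ) (h : z ∉ G.closedNeighborFinset x) : mu G x p z = 0 := by
  simp only [mem_closedNeighborFinset, not_or] at h
  simp [mu, h.1, h.2]

lemma support_mu_subset (x : V) (p : ℝ) : support (mu G x p) ⊆ G.closedNeighborFinset x :=
  fun _ hz => by
    by_contra h
    exact hz (mu_eq_zero_of_notMem G p h)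

lemma mu_nonneg (h0 : 0 ≤ p) (h1 : p ≤ 1) (z : V) : 0 ≤ mu G x p z := by
  unfold mu; split_ifs
  · exact h0
  · exact div_nonneg (by linarith) (Nat.cast_nonneg _)
  · exact le_rfl

lemma mu_le_one (h0 : 0 ≤ p) (h1 : p ≤ 1) (z : V) : mu G x p z ≤ 1 := by
  unfold mu; split_ifs with _ hxz
  · exact h1
  · have : (1 : ℝ) ≤ G.degree x := by
      exact_mod_cast (G.degree_pos_iff_exists_adj x).mpr ⟨z, hxz⟩
    exact div_le_one_of_le₀ (by linarith) (by linarith)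
  · exact zero_le_one

lemma sum_neighborFinset_mu (hx : 0 < G.degree x) (p : ℝ) :
    ∑ z ∈ G.neighborFinset x, mu G x p z = 1 - p := by
  rw [sum_congr rfl fun z hz => mu_apply_of_adj G p ((G.mem_neighborFinset x z).mp hz),
    sum_const, G.card_neighborFinset_eq_degree, nsmul_eq_mul]
  field_simp

lemma sum_closedNeighborFinset_mu (hx : 0 < G.degree x) (p : ℝ) :
    ∑ z ∈ G.closedNeighborFinset x, mu G x p z = 1 := by
  rw [closedNeighborFinset, sum_insert (G.notMem_neighborFinset_self x), mu_apply_self,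
    sum_neighborFinset_mu G hx]
  ring

lemma isFinProb_mu (hx : 0 < G.degree x) (h0 : 0 ≤ p) (h1 : p ≤ 1) : IsFinProb (mu G x p) :=
  ⟨mu_nonneg G h0 h1, (finite_toSet _).subset (support_mu_subset G x p), by
    rw [finsum_eq_sum_of_support_subset _ (support_mu_subset G x p),
      sum_closedNeighborFinset_mu G hx]⟩

end Measures

lemma exists_pos_of_sum_lt_sum_of_subset {α : Type*} {s t : Finset α} {f : α → ℝ} (hts : t ⊆ s)
    (h : ∑ i ∈ t, f i < ∑ i ∈ s, f i) : ∃ i ∈ s \ t, 0 < f i := by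
  have := sum_sdiff (f := f) hts
  exact exists_lt_of_sum_lt (f := 0) (by simp only [Pi.zero_apply, sum_const_zero]; linarith)

section Plans

variable {V : Type*} {μ1 μ2 : V → ℝ} {π : V × V → ℝ} {A B : Finset V}

lemma IsPlan.nonneg (h : IsPlan π μ1 μ2) (q : V × V) : 0 ≤ π q := (h.1 q).1

lemma IsPlan.finite_support_row (h : IsPlan π μ1 μ2) (u : V) :
    (support fun v => π (u, v)).Finite :=
  h.2.1.preimage (Prod.mk_right_injective u).injOn

lemma IsPlan.finite_support_col (h : IsPlan π μ1 μ2) (v : V) :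
    (support fun u => π (u, v)).Finite :=
  h.2.1.preimage (Prod.mk_left_injective v).injOn

lemma IsPlan.le_left (h : IsPlan π μ1 μ2) (u v : V) : π (u, v) ≤ μ1 u := by
  rw [← h.2.2.1 u]
  exact single_le_finsum v (h.finite_support_row u) fun _ => h.nonneg _

lemma IsPlan.le_right (h : IsPlan π μ1 μ2) (u v : V) : π (u, v) ≤ μ2 v := by
  rw [← h.2.2.2 v]
  exact single_le_finsum u (h.finite_support_col v) fun _ => h.nonneg _

lemma IsPlan.eq_zero_of_notMem (h : IsPlan π μ1 μ2) (hA : support μ1 ⊆ A) (hB : support μ2 ⊆ B)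
    {q : V × V} (hq : q ∉ A ×ˢ B) : π q = 0 := by
  by_contra hq0
  have hpos : 0 < π q := (h.nonneg q).lt_of_ne' hq0
  exact hq (mem_product.mpr ⟨hA (hpos.trans_le (h.le_left q.1 q.2)).ne',
    hB (hpos.trans_le (h.le_right q.1 q.2)).ne'⟩)

lemma IsPlan.sum_row (h : IsPlan π μ1 μ2) (hA : support μ1 ⊆ A) (hB : support μ2 ⊆ B)
    (u : V) : ∑ v ∈ B, π (u, v) = μ1 u := by
  rw [← h.2.2.1 u, finsum_eq_sum_of_support_subset]
  intro v hv
  by_contra hvB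
  exact hv (h.eq_zero_of_notMem hA hB fun hq => hvB (mem_product.mp hq).2)

lemma IsPlan.sum_col (h : IsPlan π μ1 μ2) (hA : support μ1 ⊆ A) (hB : support μ2 ⊆ B)
    (v : V) : ∑ u ∈ A, π (u, v) = μ2 v := by
  rw [← h.2.2.2 v, finsum_eq_sum_of_support_subset]
  intro u hu
  by_contra huA
  exact hu (h.eq_zero_of_notMem hA hB fun hq => huA (mem_product.mp hq).1)

lemma IsPlan.add_le_left (h : IsPlan π μ1 μ2)
    (hA : support μ1 ⊆ A) (hB : support μ2 ⊆ B) {u v v' : V} (hvv' : v ≠ v') (hv : v ∈ B)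
    (hv' : v' ∈ B) : π (u, v) + π (u, v') ≤ μ1 u := by
  rw [← sum_pair hvv' (f := fun v => π (u, v)), ← h.sum_row hA hB u]
  exact sum_le_sum_of_subset_of_nonneg (insert_subset hv (singleton_subset_iff.mpr hv'))
    fun _ _ _ => h.nonneg _

lemma IsPlan.add_le_right (h : IsPlan π μ1 μ2)
    (hA : support μ1 ⊆ A) (hB : support μ2 ⊆ B) {u u' v : V} (huu' : u ≠ u') (hu : u ∈ A)
    (hu' : u' ∈ A) : π (u, v) + π (u', v) ≤ μ2 v := by
  rw [← sum_pair huu' (f := fun u => π (u, v)), ← h.sum_col hA hB v]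
  exact sum_le_sum_of_subset_of_nonneg (insert_subset hu (singleton_subset_iff.mpr hu'))
    fun _ _ _ => h.nonneg _

lemma isPlan_of_sum (hπ : ∀ q, π q ∈ Set.Icc (0 : ℝ) 1) (hzero : ∀ q ∉ A ×ˢ B, π q = 0)
    (hrow : ∀ u, ∑ v ∈ B, π (u, v) = μ1 u) (hcol : ∀ v, ∑ u ∈ A, π (u, v) = μ2 v) :
    IsPlan π μ1 μ2 := by
  have hsupp : support π ⊆ ↑(A ×ˢ B) := fun q hq => by
    by_contra h
    exact hq (hzero q h)
  refine ⟨hπ, (A ×ˢ B).finite_toSet.subset hsupp, fun u => ?_, fun v => ?_⟩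
  · rw [← hrow u, finsum_eq_sum_of_support_subset]
    exact fun v hv => (mem_product.mp (hsupp hv)).2
  · rw [← hcol v, finsum_eq_sum_of_support_subset]
    exact fun u hu => (mem_product.mp (hsupp hu)).1

lemma isPlan_iff_of_support_subset (hA : support μ1 ⊆ A) (hB : support μ2 ⊆ B) :
    IsPlan π μ1 μ2 ↔ (∀ q, π q ∈ Set.Icc (0 : ℝ) 1) ∧ (∀ q ∉ A ×ˢ B, π q = 0) ∧
      (∀ u, ∑ v ∈ B, π (u, v) = μ1 u) ∧ (∀ v, ∑ u ∈ A, π (u, v) = μ2 v) :=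
  ⟨fun h => ⟨h.1, fun _ => h.eq_zero_of_notMem hA hB, h.sum_row hA hB, h.sum_col hA hB⟩,
    fun ⟨h1, h2, h3, h4⟩ => isPlan_of_sum h1 h2 h3 h4⟩

lemma isPlan_of_sum_of_nonneg (hμ1 : ∀ u, μ1 u ≤ 1) (hπ : ∀ q, 0 ≤ π q)
    (hzero : ∀ q ∉ A ×ˢ B, π q = 0) (hrow : ∀ u, ∑ v ∈ B, π (u, v) = μ1 u)
    (hcol : ∀ v, ∑ u ∈ A, π (u, v) = μ2 v) : IsPlan π μ1 μ2 := by
  refine isPlan_of_sum (fun q => ⟨hπ q, ?_⟩) hzero hrow hcol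
  by_cases hq : q ∈ A ×ˢ B
  · calc π q ≤ ∑ v ∈ B, π (q.1, v) :=
          single_le_sum (fun v _ => hπ (q.1, v)) (mem_product.mp hq).2
      _ ≤ 1 := (hrow q.1).trans_le (hμ1 q.1)
  · rw [hzero q hq]
    exact zero_le_one

lemma isPlan_mul (h1 : IsFinProb μ1) (h2 : IsFinProb μ2) :
    IsPlan (fun q => μ1 q.1 * μ2 q.2) μ1 μ2 := by
  have hle1 : ∀ v, μ1 v ≤ 1 := fun v => h1.2.2 ▸ single_le_finsum v h1.2.1 h1.1
  have hle2 : ∀ v, μ2 v ≤ 1 := fun v => h2.2.2 ▸ single_le_finsum v h2.2.1 h2.1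
  refine ⟨fun q => ⟨mul_nonneg (h1.1 _) (h2.1 _), ?_⟩, ?_, fun u => ?_, fun v => ?_⟩
  · exact mul_le_one₀ (hle1 _) (h2.1 _) (hle2 _)
  · refine (h1.2.1.prod h2.2.1).subset fun q hq => ?_
    exact ⟨left_ne_zero_of_mul hq, right_ne_zero_of_mul hq⟩
  · simp only [← mul_finsum' _ _ h2.2.1, h2.2.2, mul_one]
  · simp only [← finsum_mul' _ _ h1.2.1, h1.2.2, one_mul]

lemma isCompact_setOf_isPlan (hA : support μ1 ⊆ A) (hB : support μ2 ⊆ B) :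
    IsCompact {π : V × V → ℝ | IsPlan π μ1 μ2} := by
  have hclosed : IsClosed {π : V × V → ℝ | (∀ q ∉ A ×ˢ B, π q = 0) ∧
      (∀ u, ∑ v ∈ B, π (u, v) = μ1 u) ∧ (∀ v, ∑ u ∈ A, π (u, v) = μ2 v)} := by
    have hsum : ∀ (s : Finset V) (f : V → V × V),
        Continuous fun π : V × V → ℝ => ∑ v ∈ s, π (f v) :=
      fun s f => continuous_finsetSum _ fun v _ => continuous_apply (f v)
    simp only [Set.ofPred_and, Set.ofPred_forall]
    exact (isClosed_iInter fun q => isClosed_iInter fun _ =>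
      isClosed_eq (continuous_apply q) continuous_const).inter
      ((isClosed_iInter fun u => isClosed_eq (hsum B (u, ·)) continuous_const).inter
      (isClosed_iInter fun v => isClosed_eq (hsum A (·, v)) continuous_const))
  convert (isCompact_univ_pi (s := fun _ : V × V => Set.Icc (0 : ℝ) 1)
    fun _ => isCompact_Icc).inter_right hclosed using 1
  ext π
  simp only [isPlan_iff_of_support_subset hA hB, Set.mem_ofPred_eq, Set.mem_inter_iff,
    Set.mem_univ_pi]

end Plans

section Cost

variable {V : Type*} (G : SimpleGraph V) {μ1 μ2 : V → ℝ} {π : V × V → ℝ} {A B : Finset V}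

lemma cost_eq_sum {s : Finset (V × V)} (h : ∀ q ∉ s, π q = 0) :
    cost G π = ∑ q ∈ s, (G.dist q.1 q.2 : ℝ) * π q := by
  refine finsum_eq_sum_of_support_subset _ fun q hq => ?_
  by_contra hqs
  simp [h q hqs] at hq

lemma W1_le_cost (h : IsPlan π μ1 μ2) : W1 G μ1 μ2 ≤ cost G π :=
  csInf_le ⟨0, by
    rintro c ⟨π', hπ', rfl⟩
    exact finsum_nonneg fun q => mul_nonneg (Nat.cast_nonneg _) (hπ'.nonneg q)⟩ ⟨π, h, rfl⟩

lemma exists_isPlan_cost_eq_W1 (hA : support μ1 ⊆ A) (hB : support μ2 ⊆ B)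
    (hne : ∃ π, IsPlan π μ1 μ2) : ∃ π, IsPlan π μ1 μ2 ∧ cost G π = W1 G μ1 μ2 := by
  have hcont : ContinuousOn (cost G) {π | IsPlan π μ1 μ2} :=
    (continuous_finsetSum (A ×ˢ B) fun q _ => continuous_const.mul (continuous_apply q))
      |>.continuousOn.congr fun π hπ => cost_eq_sum G fun _ => hπ.eq_zero_of_notMem hA hB
  obtain ⟨π, hπ, hmin⟩ := (isCompact_setOf_isPlan hA hB).exists_isMinOn hne hcont
  refine ⟨π, hπ, le_antisymm ?_ (W1_le_cost G hπ)⟩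
  exact le_csInf ⟨_, π, hπ, rfl⟩ fun _ ⟨π', hπ', hc⟩ => hc ▸ hmin hπ'

lemma isCompact_setOf_isPlan_cost_eq (hA : support μ1 ⊆ A) (hB : support μ2 ⊆ B) (c : ℝ) :
    IsCompact {π | IsPlan π μ1 μ2 ∧ cost G π = c} := by
  have hclosed : IsClosed {π : V × V → ℝ | ∑ q ∈ A ×ˢ B, (G.dist q.1 q.2 : ℝ) * π q = c} :=
    isClosed_eq (continuous_finsetSum _ fun q _ => continuous_const.mul (continuous_apply q))
      continuous_const
  convert (isCompact_setOf_isPlan hA hB).inter_right hclosed using 1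
  ext π
  simp only [Set.mem_ofPred_eq, Set.mem_inter_iff]
  exact and_congr_right fun hπ => by
    rw [cost_eq_sum G fun _ => hπ.eq_zero_of_notMem hA hB]

end Cost

section Swap

variable {V : Type*} {a b c d : V} {A B : Finset V}

noncomputable def swapCycle (a b c d : V) : V × V → ℝ :=
  Pi.single (a, b) 1 + Pi.single (c, d) 1 - Pi.single (a, d) 1 - Pi.single (c, b) 1

lemma swapCycle_apply_of_ne_right {u v : V} (hb : v ≠ b) (hd : v ≠ d) :
    swapCycle a b c d (u, v) = 0 := by
  simp [swapCycle, hb, hd]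

lemma swapCycle_eq_zero_of_notMem (ha : a ∈ A) (hc : c ∈ A) (hb : b ∈ B) (hd : d ∈ B)
    {q : V × V} (hq : q ∉ A ×ˢ B) : swapCycle a b c d q = 0 := by
  have : ∀ u ∈ A, ∀ v ∈ B, q ≠ (u, v) := fun u hu v hv h => hq (h ▸ mk_mem_product hu hv)
  simp [swapCycle, this a ha b hb, this c hc d hd, this a ha d hd, this c hc b hb]

lemma sum_mul_swapCycle (φ : V × V → ℝ) (ha : a ∈ A) (hc : c ∈ A) (hb : b ∈ B) (hd : d ∈ B) :
    ∑ q ∈ A ×ˢ B, φ q * swapCycle a b c d q = φ (a, b) + φ (c, d) - φ (a, d) - φ (c, b) := by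
  simp [swapCycle, mul_add, mul_sub, sum_add_distrib, sum_sub_distrib, Pi.single_apply, ha, hb,
    hc, hd]

lemma sum_single_row (r : ℝ) (hb : b ∈ B) (u : V) :
    ∑ v ∈ B, (Pi.single (a, b) r : V × V → ℝ) (u, v) = if u = a then r else 0 := by
  by_cases hu : u = a <;> simp [Pi.single_apply, hu, hb]

lemma sum_single_col (r : ℝ) (ha : a ∈ A) (v : V) :
    ∑ u ∈ A, (Pi.single (a, b) r : V × V → ℝ) (u, v) = if v = b then r else 0 := by
  by_cases hv : v = b <;> simp [Pi.single_apply, hv, ha]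

lemma sum_swapCycle_row (hb : b ∈ B) (hd : d ∈ B) (u : V) :
    ∑ v ∈ B, swapCycle a b c d (u, v) = 0 := by
  simp only [swapCycle, Pi.add_apply, Pi.sub_apply, sum_add_distrib, sum_sub_distrib,
    sum_single_row 1 hb, sum_single_row 1 hd]
  ring

lemma sum_swapCycle_col (ha : a ∈ A) (hc : c ∈ A) (v : V) :
    ∑ u ∈ A, swapCycle a b c d (u, v) = 0 := by
  simp only [swapCycle, Pi.add_apply, Pi.sub_apply, sum_add_distrib, sum_sub_distrib,
    sum_single_col 1 ha, sum_single_col 1 hc]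
  ring

lemma add_smul_swapCycle_nonneg {π : V × V → ℝ} (hπ : ∀ q, 0 ≤ π q) {δ : ℝ} (hδ : 0 ≤ δ)
    (had : δ ≤ π (a, d)) (hcb : δ ≤ π (c, b)) (q : V × V) : 0 ≤ π q + δ * swapCycle a b c d q := by
  obtain ⟨u, v⟩ := q
  have huv := hπ (u, v)
  clear hπ
  simp only [swapCycle, Pi.add_apply, Pi.sub_apply, Pi.single_apply, Prod.mk.injEq]
  split_ifs <;> simp_all <;> linarith

variable {μ1 μ2 : V → ℝ} {π : V × V → ℝ} {δ : ℝ}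

lemma IsPlan.add_smul_swapCycle (h : IsPlan π μ1 μ2) (hA : support μ1 ⊆ A)
    (hB : support μ2 ⊆ B) (hμ1 : ∀ u, μ1 u ≤ 1) (ha : a ∈ A) (hc : c ∈ A) (hb : b ∈ B)
    (hd : d ∈ B) (hδ : 0 ≤ δ) (had : δ ≤ π (a, d)) (hcb : δ ≤ π (c, b)) :
    IsPlan (π + δ • swapCycle a b c d) μ1 μ2 := by
  refine isPlan_of_sum_of_nonneg (A := A) (B := B) hμ1
    (add_smul_swapCycle_nonneg h.nonneg hδ had hcb)
    (fun q hq => ?_) (fun u => ?_) (fun v => ?_)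
  · simp [h.eq_zero_of_notMem hA hB hq, swapCycle_eq_zero_of_notMem ha hc hb hd hq]
  · simp [sum_add_distrib, ← mul_sum, sum_swapCycle_row hb hd, h.sum_row hA hB]
  · simp [sum_add_distrib, ← mul_sum, sum_swapCycle_col ha hc, h.sum_col hA hB]

lemma IsPlan.cost_add_smul_swapCycle (G : SimpleGraph V) (h : IsPlan π μ1 μ2)
    (hA : support μ1 ⊆ A) (hB : support μ2 ⊆ B) (ha : a ∈ A) (hc : c ∈ A) (hb : b ∈ B)
    (hd : d ∈ B) : cost G (π + δ • swapCycle a b c d) = cost G π +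
      δ * (G.dist a b + G.dist c d - G.dist a d - G.dist c b : ℝ) := by
  have hzero : ∀ q ∉ A ×ˢ B, π q = 0 := fun _ => h.eq_zero_of_notMem hA hB
  rw [cost_eq_sum G hzero, cost_eq_sum (s := A ×ˢ B) G fun q hq => by
    simp [hzero q hq, swapCycle_eq_zero_of_notMem ha hc hb hd hq]]
  simp only [Pi.add_apply, Pi.smul_apply, smul_eq_mul, mul_add, sum_add_distrib,
    mul_left_comm _ δ, ← mul_sum, sum_mul_swapCycle _ ha hc hb hd]

end Swap

section Idleness

variable {V : Type*} (G : SimpleGraph V) [G.LocallyFinite] {x y : V}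

lemma exists_isPlan_mu_cost_eq_W1 (hxy : G.Adj x y) {p : ℝ} (h0 : 0 ≤ p) (h1 : p ≤ 1) :
    ∃ π, IsPlan π (mu G x p) (mu G y p) ∧ cost G π = W1 G (mu G x p) (mu G y p) :=
  exists_isPlan_cost_eq_W1 G (support_mu_subset G x p) (support_mu_subset G y p)
    ⟨_, isPlan_mul (isFinProb_mu G (G.degree_pos_iff_exists_adj x |>.mpr ⟨y, hxy⟩) h0 h1)
      (isFinProb_mu G (G.degree_pos_iff_exists_adj y |>.mpr ⟨x, hxy.symm⟩) h0 h1)⟩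

lemma IsPlan.sub_le_apply (hxy : G.Adj x y) {p : ℝ} {π : V × V → ℝ}
    (hπ : IsPlan π (mu G x p) (mu G y p)) : p - (1 - p) ≤ π (x, y) := by
  have hrow := hπ.sum_row (support_mu_subset G x p) (support_mu_subset G y p) x
  rw [closedNeighborFinset, sum_insert (G.notMem_neighborFinset_self y), mu_apply_self] at hrow
  have hle : ∑ v ∈ G.neighborFinset y, π (x, v) ≤ ∑ v ∈ G.neighborFinset y, mu G y p v :=
    sum_le_sum fun v _ => hπ.le_right x v
  rw [sum_neighborFinset_mu G (G.degree_pos_iff_exists_adj y |>.mpr ⟨x, hxy.symm⟩)] at hle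
  linarith

noncomputable def rescalePlan (x y : V) (p p' : ℝ) (π : V × V → ℝ) : V × V → ℝ :=
  ((1 - p) / (1 - p')) • π + Pi.single (x, y) (p - (1 - p) / (1 - p') * p')

lemma isPlan_rescalePlan (hxy : G.Adj x y) {p p' : ℝ} (hp : 1 / 2 ≤ p) (hp1 : p < 1)
    (hp0' : 0 ≤ p') (hp1' : p' < 1) {π : V × V → ℝ} (hπ : IsPlan π (mu G x p') (mu G y p')) :
    IsPlan (rescalePlan x y p p' π) (mu G x p) (mu G y p) := by
  set l := (1 - p) / (1 - p')
  have hl : l * (1 - p') = 1 - p := div_mul_cancel₀ _ (by linarith)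
  have hl0 : 0 ≤ l := div_nonneg (by linarith) (by linarith)
  have hA := support_mu_subset G x p'
  have hB := support_mu_subset G y p'
  have hxA := self_mem_closedNeighborFinset (G := G) x
  have hyB := self_mem_closedNeighborFinset (G := G) y
  refine isPlan_of_sum_of_nonneg (A := G.closedNeighborFinset x)
    (B := G.closedNeighborFinset y) (mu_le_one G (by linarith) hp1.le)
    (fun q => ?_) (fun q hq => ?_) (fun u => ?_) (fun v => ?_) <;>
    simp only [rescalePlan, Pi.add_apply, Pi.smul_apply, smul_eq_mul]
  · by_cases hq : q = (x, y)
    · have := hπ.sub_le_apply G hxy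
      rw [hq, Pi.single_eq_same]
      nlinarith
    · simpa [Pi.single_apply, hq] using mul_nonneg hl0 (hπ.nonneg q)
  · have hne : q ≠ (x, y) := fun h => hq (h ▸ mk_mem_product hxA hyB)
    simp [hπ.eq_zero_of_notMem hA hB hq, hne]
  · rw [sum_add_distrib, ← mul_sum, hπ.sum_row hA hB, sum_single_row _ hyB]
    by_cases hu : u = x
    · rw [hu, if_pos rfl, mu_apply_self, mu_apply_self]; ring
    · rw [mu_apply_of_ne G p hu, mu_apply_of_ne G p' hu, if_neg hu, add_zero, ← mul_assoc, hl]
  · rw [sum_add_distrib, ← mul_sum, hπ.sum_col hA hB, sum_single_col _ hxA]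
    by_cases hv : v = y
    · rw [hv, if_pos rfl, mu_apply_self, mu_apply_self]; ring
    · rw [mu_apply_of_ne G p hv, mu_apply_of_ne G p' hv, if_neg hv, add_zero, ← mul_assoc, hl]

lemma cost_rescalePlan (hxy : G.Adj x y) {p p' : ℝ} {π : V × V → ℝ}
    (hπ : IsPlan π (mu G x p') (mu G y p')) :
    cost G (rescalePlan x y p p' π) = p + (1 - p) / (1 - p') * (cost G π - p') := by
  set s := G.closedNeighborFinset x ×ˢ G.closedNeighborFinset y
  have hzero : ∀ q ∉ s, π q = 0 :=
    fun _ => hπ.eq_zero_of_notMem (support_mu_subset G x p') (support_mu_subset G y p')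
  have hxy' : (x, y) ∈ s := mk_mem_product (self_mem_closedNeighborFinset x)
    (self_mem_closedNeighborFinset y)
  rw [cost_eq_sum G hzero, cost_eq_sum (s := s) G fun q hq => by
    simp [rescalePlan, hzero q hq, show q ≠ (x, y) from fun h => hq (h ▸ hxy')]]
  simp only [rescalePlan, Pi.add_apply, Pi.smul_apply, smul_eq_mul, mul_add, sum_add_distrib,
    mul_left_comm _ ((1 - p) / (1 - p')), ← mul_sum]
  simp [Pi.single_apply, hxy', SimpleGraph.dist_eq_one_iff_adj.mpr hxy]
  ring

lemma W1_sub_div_le (hxy : G.Adj x y) {p p' : ℝ} (hp : 1 / 2 ≤ p) (hp1 : p < 1)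
    (hp0' : 0 ≤ p') (hp1' : p' < 1) :
    (W1 G (mu G x p) (mu G y p) - p) / (1 - p) ≤
      (W1 G (mu G x p') (mu G y p') - p') / (1 - p') := by
  obtain ⟨π, hπ, hcost⟩ := exists_isPlan_mu_cost_eq_W1 G hxy hp0' hp1'.le
  have h := W1_le_cost G (isPlan_rescalePlan G hxy hp hp1 hp0' hp1' hπ)
  rw [cost_rescalePlan G hxy hπ, hcost] at h
  rw [div_le_div_iff₀ (by linarith) (by linarith)]
  calc (W1 G (mu G x p) (mu G y p) - p) * (1 - p')
      ≤ (1 - p) / (1 - p') * (W1 G (mu G x p') (mu G y p') - p') * (1 - p') :=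
        mul_le_mul_of_nonneg_right (by linarith) (by linarith)
    _ = (W1 G (mu G x p') (mu G y p') - p') * (1 - p) := by
        field_simp [show (1 : ℝ) - p' ≠ 0 by linarith]

end Idleness

section Clean

variable {V : Type*} (G : SimpleGraph V) [G.LocallyFinite] {x y : V} {p : ℝ}
  {π : V × V → ℝ}

noncomputable def commonMass (x y : V) (π : V × V → ℝ) : ℝ :=
  ∑ u ∈ G.neighborFinset x ∩ G.neighborFinset y, π (u, y)

lemma commonMass_add_smul (δ : ℝ) (e : V × V → ℝ) :
    commonMass G x y (π + δ • e) = commonMass G x y π + δ * commonMass G x y e := by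
  simp [commonMass, sum_add_distrib, mul_sum]

lemma IsPlan.add_smul_swapCycle_common (hπ : IsPlan π (mu G x p) (mu G y p)) (hxy : G.Adj x y)
    (h0 : 0 ≤ p) (h1 : p ≤ 1) {u₀ : V} (hu₀x : G.Adj x u₀) (hu₀y : G.Adj y u₀) {δ : ℝ}
    (hδ : 0 ≤ δ) (hδx : δ ≤ π (x, u₀)) (hδy : δ ≤ π (u₀, y)) :
    IsPlan (π + δ • swapCycle x y u₀ u₀) (mu G x p) (mu G y p) ∧
      cost G (π + δ • swapCycle x y u₀ u₀) = cost G π - δ ∧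
      commonMass G x y (π + δ • swapCycle x y u₀ u₀) = commonMass G x y π - δ := by
  have hA := support_mu_subset G x p
  have hB := support_mu_subset G y p
  have hx := self_mem_closedNeighborFinset (G := G) x
  have hy := self_mem_closedNeighborFinset (G := G) y
  have hu₀S := mem_closedNeighborFinset_of_adj hu₀x
  have hu₀T := mem_closedNeighborFinset_of_adj hu₀y
  refine ⟨hπ.add_smul_swapCycle hA hB (mu_le_one G h0 h1) hx hu₀S hy hu₀T hδ hδx hδy, ?_, ?_⟩
  · rw [hπ.cost_add_smul_swapCycle G hA hB hx hu₀S hy hu₀T, SimpleGraph.dist_self,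
      SimpleGraph.dist_eq_one_iff_adj.mpr hxy, SimpleGraph.dist_eq_one_iff_adj.mpr hu₀x,
      SimpleGraph.dist_eq_one_iff_adj.mpr hu₀y.symm]
    push_cast; ring
  · have hu₀ : u₀ ∈ G.neighborFinset x ∩ G.neighborFinset y := by simp [hu₀x, hu₀y]
    have hx' : x ∉ G.neighborFinset x ∩ G.neighborFinset y := by simp
    have hs : commonMass G x y (swapCycle x y u₀ u₀) = -1 := by
      simp [commonMass, swapCycle, Pi.single_apply, sum_sub_distrib, hu₀, hx',
        hu₀y.ne]
    rw [commonMass_add_smul, hs]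
    ring

lemma IsPlan.exists_pos_apply_left (hπ : IsPlan π (mu G x p) (mu G y p)) {u₀ : V}
    (hu₀x : G.Adj x u₀) (hs : 0 < π (u₀, y)) :
    ∃ v₀ ∈ G.closedNeighborFinset y, v₀ ≠ y ∧ 0 < π (x, v₀) := by
  have hA := support_mu_subset G x p
  have hB := support_mu_subset G y p
  have hy := self_mem_closedNeighborFinset (G := G) y
  have hcoly : π (x, y) + π (u₀, y) ≤ p := by
    simpa [mu_apply_self] using hπ.add_le_right hA hB hu₀x.ne
      (self_mem_closedNeighborFinset x) (mem_closedNeighborFinset_of_adj hu₀x) (v := y)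
  obtain ⟨v₀, hv₀, hpos⟩ := exists_pos_of_sum_lt_sum_of_subset (singleton_subset_iff.mpr hy)
    (f := fun v => π (x, v)) (by rw [sum_singleton, hπ.sum_row hA hB, mu_apply_self]; linarith)
  rw [mem_sdiff, mem_singleton] at hv₀
  exact ⟨v₀, hv₀.1, hv₀.2, hpos⟩

/-- `u₀` must receive `(1 - p) / d_y ≥ (1 - p) / d_x`, but it keeps less than its own mass
`(1 - p) / d_x` since part of that goes to `y`. -/
lemma IsPlan.exists_pos_apply_right (hπ : IsPlan π (mu G x p) (mu G y p)) (hxy : G.Adj x y)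
    (hd : G.degree y ≤ G.degree x) (h1 : p ≤ 1) {u₀ : V} (hu₀x : G.Adj x u₀)
    (hu₀y : G.Adj y u₀) (hr : π (x, u₀) = 0) (hs : 0 < π (u₀, y)) :
    ∃ w ∈ G.neighborFinset x, w ≠ u₀ ∧ 0 < π (w, u₀) := by
  have hA := support_mu_subset G x p
  have hB := support_mu_subset G y p
  have hx := self_mem_closedNeighborFinset (G := G) x
  have hu₀S := mem_closedNeighborFinset_of_adj hu₀x
  have hrowu₀ : π (u₀, u₀) + π (u₀, y) ≤ (1 - p) / G.degree x := by
    simpa [mu_apply_of_adj G p hu₀x] using hπ.add_le_left hA hB hu₀y.ne'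
      (mem_closedNeighborFinset_of_adj hu₀y) (self_mem_closedNeighborFinset y) (u := u₀)
  have hdeg : (1 - p) / G.degree x ≤ (1 - p) / G.degree y :=
    div_le_div_of_nonneg_left (by linarith)
      (by exact_mod_cast (G.degree_pos_iff_exists_adj y).mpr ⟨x, hxy.symm⟩)
      (by exact_mod_cast hd)
  obtain ⟨w, hw, hpos⟩ := exists_pos_of_sum_lt_sum_of_subset
    (insert_subset hx (singleton_subset_iff.mpr hu₀S)) (f := fun u => π (u, u₀))
    (by rw [sum_pair hu₀x.ne, hπ.sum_col hA hB, mu_apply_of_adj G p hu₀y, hr]; linarith)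
  simp only [mem_sdiff, mem_insert, mem_singleton, not_or] at hw
  exact ⟨w, (G.mem_neighborFinset x w).mpr
    ((mem_closedNeighborFinset.mp hw.1).resolve_left hw.2.1), hw.2.2, hpos⟩

lemma IsPlan.exists_transfer_to_common_neighbor (hπ : IsPlan π (mu G x p) (mu G y p))
    (hG : G.Connected) (hxy : G.Adj x y) (hd : G.degree y ≤ G.degree x) (h0 : 0 ≤ p)
    (h1 : p ≤ 1) {u₀ : V} (hu₀x : G.Adj x u₀) (hu₀y : G.Adj y u₀) (hr : π (x, u₀) = 0)
    (hs : 0 < π (u₀, y)) :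
    ∃ δ > 0, ∃ π₁, IsPlan π₁ (mu G x p) (mu G y p) ∧ cost G π₁ ≤ cost G π + δ ∧
      commonMass G x y π₁ = commonMass G x y π ∧ δ ≤ π₁ (x, u₀) ∧ δ ≤ π₁ (u₀, y) := by
  have hA := support_mu_subset G x p
  have hB := support_mu_subset G y p
  obtain ⟨v₀, hv₀T, hv₀y, hv₀pos⟩ := hπ.exists_pos_apply_left G hu₀x hs
  obtain ⟨w, hw, hwu₀, hwpos⟩ := hπ.exists_pos_apply_right G hxy hd h1 hu₀x hu₀y hr hs
  have hxw : G.Adj x w := (G.mem_neighborFinset x w).mp hw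
  have hv₀u₀ : v₀ ≠ u₀ := by rintro rfl; simp [hr] at hv₀pos
  set δ := min (π (u₀, y)) (min (π (x, v₀)) (π (w, u₀)))
  have hδ : 0 < δ := lt_min hs (lt_min hv₀pos hwpos)
  have hx := self_mem_closedNeighborFinset (G := G) x
  have hwS := mem_closedNeighborFinset_of_adj hxw
  have hu₀T := mem_closedNeighborFinset_of_adj hu₀y
  refine ⟨δ, hδ, π + δ • swapCycle x u₀ w v₀,
    hπ.add_smul_swapCycle hA hB (mu_le_one G h0 h1) hx hwS hu₀T hv₀T hδ.le
      ((min_le_right _ _).trans (min_le_left _ _)) ((min_le_right _ _).trans (min_le_right _ _)),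
    ?_, ?_, ?_, ?_⟩
  · have hwv₀ : (G.dist w v₀ : ℝ) ≤ 1 + G.dist x v₀ := by
      have := hG.dist_triangle (u := w) (v := x) (w := v₀)
      rw [SimpleGraph.dist_eq_one_iff_adj.mpr hxw.symm] at this
      exact_mod_cast this
    have hwu₀' : (1 : ℝ) ≤ G.dist w u₀ := by exact_mod_cast hG.pos_dist_of_ne hwu₀
    rw [hπ.cost_add_smul_swapCycle G hA hB hx hwS hu₀T hv₀T,
      SimpleGraph.dist_eq_one_iff_adj.mpr hu₀x]
    push_cast
    nlinarith
  · have hs : commonMass G x y (swapCycle x u₀ w v₀) = 0 := by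
      simp [commonMass, swapCycle_apply_of_ne_right hu₀y.ne (Ne.symm hv₀y)]
    rw [commonMass_add_smul, hs, mul_zero, add_zero]
  · simp [swapCycle, hr, hxw.ne, hv₀u₀.symm]
  · rw [Pi.add_apply, Pi.smul_apply, swapCycle_apply_of_ne_right hu₀y.ne (Ne.symm hv₀y),
      smul_zero, add_zero]
    exact min_le_left _ _

lemma IsPlan.exists_commonMass_lt (hπ : IsPlan π (mu G x p) (mu G y p)) (hG : G.Connected)
    (hxy : G.Adj x y) (hd : G.degree y ≤ G.degree x) (h0 : 0 ≤ p) (h1 : p ≤ 1) {u₀ : V}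
    (hu₀x : G.Adj x u₀) (hu₀y : G.Adj y u₀) (hs : 0 < π (u₀, y)) :
    ∃ π', IsPlan π' (mu G x p) (mu G y p) ∧ cost G π' ≤ cost G π ∧
      commonMass G x y π' < commonMass G x y π := by
  obtain ⟨δ, hδ, π₁, hπ₁, hcost, hmass, hδx, hδy⟩ : ∃ δ > 0, ∃ π₁,
      IsPlan π₁ (mu G x p) (mu G y p) ∧ cost G π₁ ≤ cost G π + δ ∧
      commonMass G x y π₁ = commonMass G x y π ∧ δ ≤ π₁ (x, u₀) ∧ δ ≤ π₁ (u₀, y) := by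
    by_cases hr : π (x, u₀) = 0
    · exact hπ.exists_transfer_to_common_neighbor G hG hxy hd h0 h1 hu₀x hu₀y hr hs
    · have hδ : 0 < min (π (x, u₀)) (π (u₀, y)) := lt_min ((hπ.nonneg _).lt_of_ne' hr) hs
      exact ⟨_, hδ, π, hπ, by linarith, rfl, min_le_left _ _, min_le_right _ _⟩
  obtain ⟨hπ', hcost', hmass'⟩ :=
    hπ₁.add_smul_swapCycle_common G hxy h0 h1 hu₀x hu₀y hδ.le hδx hδy
  exact ⟨_, hπ', by linarith, by linarith⟩

lemma exists_isPlan_cost_eq_W1_apply_common_eq_zero (hG : G.Connected) (hxy : G.Adj x y)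
    (hd : G.degree y ≤ G.degree x) (h0 : 0 ≤ p) (h1 : p ≤ 1) :
    ∃ π, IsPlan π (mu G x p) (mu G y p) ∧ cost G π = W1 G (mu G x p) (mu G y p) ∧
      ∀ u ∈ G.neighborFinset x ∩ G.neighborFinset y, π (u, y) = 0 := by
  have hcont : Continuous (commonMass G x y) :=
    continuous_finsetSum _ fun u _ => continuous_apply (u, y)
  obtain ⟨π, ⟨hπ, hcost⟩, hmin⟩ :=
    (isCompact_setOf_isPlan_cost_eq G (support_mu_subset G x p) (support_mu_subset G y p) _)
      |>.exists_isMinOn (exists_isPlan_mu_cost_eq_W1 G hxy h0 h1) hcont.continuousOn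
  refine ⟨π, hπ, hcost, fun u hu => ?_⟩
  by_contra hne
  simp only [mem_inter, SimpleGraph.mem_neighborFinset] at hu
  obtain ⟨π', hπ', hcost', hlt⟩ :=
    hπ.exists_commonMass_lt G hG hxy hd h0 h1 hu.1 hu.2 ((hπ.nonneg _).lt_of_ne' hne)
  have : cost G π' = W1 G (mu G x p) (mu G y p) :=
    le_antisymm (hcost'.trans hcost.le) (W1_le_cost G hπ')
  exact (hmin ⟨hπ', this⟩).not_gt hlt

end Clean

lemma sum_sum_mul_div_le {ι κ : Type*} {s : Finset ι} {t : Finset κ} {f : ι → ℝ} {g : κ → ℝ}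
    {c : ι → κ → ℝ} {a : ι → ℝ} {b : κ → ℝ} {m : ℝ} (hf : ∀ i ∈ s, 0 ≤ f i)
    (hg : ∀ j ∈ t, 0 ≤ g j) (hfm : ∑ i ∈ s, f i = m) (hgm : ∑ j ∈ t, g j = m)
    (hc : ∀ i ∈ s, ∀ j ∈ t, f i ≠ 0 → c i j ≤ a i + b j) :
    ∑ i ∈ s, ∑ j ∈ t, c i j * (f i * g j / m) ≤ ∑ i ∈ s, a i * f i + ∑ j ∈ t, b j * g j := by
  rcases eq_or_ne m 0 with rfl | hm
  · have hf0 := (sum_eq_zero_iff_of_nonneg hf).mp hfm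
    have hg0 := (sum_eq_zero_iff_of_nonneg hg).mp hgm
    have ha : ∑ i ∈ s, a i * f i = 0 := sum_eq_zero fun i hi => by rw [hf0 i hi, mul_zero]
    have hb : ∑ j ∈ t, b j * g j = 0 := sum_eq_zero fun j hj => by rw [hg0 j hj, mul_zero]
    simp [ha, hb]
  have hm0 : 0 ≤ m := hfm ▸ sum_nonneg hf
  calc ∑ i ∈ s, ∑ j ∈ t, c i j * (f i * g j / m)
      ≤ ∑ i ∈ s, ∑ j ∈ t, (a i + b j) * (f i * g j / m) := by
        refine sum_le_sum fun i hi => sum_le_sum fun j hj => ?_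
        by_cases hfi : f i = 0
        · simp [hfi]
        · exact mul_le_mul_of_nonneg_right (hc i hi j hj hfi)
            (div_nonneg (mul_nonneg (hf i hi) (hg j hj)) hm0)
    _ = ∑ i ∈ s, a i * f i * (∑ j ∈ t, g j) / m + ∑ j ∈ t, b j * g j * (∑ i ∈ s, f i) / m := by
        simp only [add_mul, sum_add_distrib, mul_sum, sum_div]
        rw [sum_comm (f := fun i j => b j * (f i * g j / m))]
        congr 1 <;> refine sum_congr rfl fun _ _ => sum_congr rfl fun _ _ => by ring
    _ = ∑ i ∈ s, a i * f i + ∑ j ∈ t, b j * g j := by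
        rw [hfm, hgm]
        field_simp

/-- Unless `u = y`, `d(u, y) ≥ 2` while `d(u, v) ≤ 1 + d(x, v)`. -/
lemma dist_le_dist_sub_one_add {V : Type*} {G : SimpleGraph V} (hG : G.Connected) {u v x y : V}
    (hxu : G.Adj x u) (hyv : G.Adj y v) (hyu : ¬ G.Adj y u) :
    (G.dist u v : ℝ) ≤ G.dist u y - 1 + 2 * (if u = y then 1 else 0) + G.dist x v := by
  by_cases huy : u = y
  · rw [huy, SimpleGraph.dist_eq_one_iff_adj.mpr hyv, SimpleGraph.dist_self, if_pos rfl]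
    push_cast
    linarith [Nat.cast_nonneg (α := ℝ) (G.dist x v)]
  · have h1 : G.dist u y ≠ 1 := fun h => hyu (SimpleGraph.dist_eq_one_iff_adj.mp h).symm
    have h2 := hG.pos_dist_of_ne huy
    have h3 := hG.dist_triangle (u := u) (v := x) (w := v)
    rw [SimpleGraph.dist_eq_one_iff_adj.mpr hxu.symm] at h3
    have h4 : G.dist u v + 1 ≤ G.dist u y + G.dist x v := by omega
    rw [if_neg huy]
    have : (G.dist u v : ℝ) + 1 ≤ G.dist u y + G.dist x v := by exact_mod_cast h4
    linarith

section Surgery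

variable {V : Type*} (G : SimpleGraph V) [G.LocallyFinite] {x y : V} {p : ℝ}
  {π : V × V → ℝ}

lemma IsPlan.sum_neighborFinset_right (hπ : IsPlan π (mu G x p) (mu G y p)) (u : V) :
    ∑ v ∈ G.neighborFinset y, π (u, v) = mu G x p u - π (u, y) := by
  have := hπ.sum_row (support_mu_subset G x p) (support_mu_subset G y p) u
  rw [closedNeighborFinset, sum_insert (G.notMem_neighborFinset_self y)] at this
  linarith

lemma IsPlan.sum_neighborFinset_left (hπ : IsPlan π (mu G x p) (mu G y p)) (v : V) :
    ∑ u ∈ G.neighborFinset x, π (u, v) = mu G y p v - π (x, v) := by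
  have := hπ.sum_col (support_mu_subset G x p) (support_mu_subset G y p) v
  rw [closedNeighborFinset, sum_insert (G.notMem_neighborFinset_self x)] at this
  linarith

lemma mu_zero_eq_zero_of_notMem (x : V) {u : V} (hu : u ∉ G.neighborFinset x) :
    mu G x 0 u = 0 := by
  by_cases hux : u = x
  · rw [hux, mu_apply_self]
  · exact mu_eq_zero_of_notMem G 0 (by simpa [mem_closedNeighborFinset, hux] using hu)

/-- Drop row `x` and column `y` of `π`, send the mass that went `u → y` and `x → v` along
`u → v` through the independent coupling of `π(·, y)` and `π(x, ·)` (both of total mass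
`p - π(x, y)`; if it is `0` the coupling term is `0` by `a / 0 = 0`), and renormalise by
`1 - p`. -/
noncomputable def zeroIdlePlan (x y : V) (p : ℝ) (π : V × V → ℝ) : V × V → ℝ := fun q =>
  if q ∈ G.neighborFinset x ×ˢ G.neighborFinset y then
    (π q + π (q.1, y) * π (x, q.2) / ∑ v ∈ G.neighborFinset y, π (x, v)) / (1 - p)
  else 0

lemma zeroIdlePlan_apply {u v : V} (hu : u ∈ G.neighborFinset x) (hv : v ∈ G.neighborFinset y) :
    zeroIdlePlan G x y p π (u, v) =
      (π (u, v) + π (u, y) * π (x, v) / ∑ v ∈ G.neighborFinset y, π (x, v)) / (1 - p) :=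
  if_pos (mk_mem_product hu hv)

lemma zeroIdlePlan_eq_zero {q : V × V} (hq : q ∉ G.neighborFinset x ×ˢ G.neighborFinset y) :
    zeroIdlePlan G x y p π q = 0 :=
  if_neg hq

lemma isPlan_zeroIdlePlan (hπ : IsPlan π (mu G x p) (mu G y p)) (hp1 : p < 1) :
    IsPlan (zeroIdlePlan G x y p π) (mu G x 0) (mu G y 0) := by
  set α := ∑ v ∈ G.neighborFinset y, π (x, v) with hα
  have hαx : α = p - π (x, y) := by rw [hα, hπ.sum_neighborFinset_right, mu_apply_self]
  have hαy : ∑ u ∈ G.neighborFinset x, π (u, y) = α := by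
    rw [hπ.sum_neighborFinset_left, mu_apply_self, hαx]
  have hα0 : 0 ≤ α := sum_nonneg fun v _ => hπ.nonneg _
  have hcancel_u : ∀ u ∈ G.neighborFinset x, π (u, y) * α / α = π (u, y) := fun u hu =>
    mul_div_cancel_of_imp fun h0 =>
      (sum_eq_zero_iff_of_nonneg fun u _ => hπ.nonneg (u, y)).mp (hαy.trans h0) u hu
  have hcancel_v : ∀ v ∈ G.neighborFinset y, π (x, v) * α / α = π (x, v) := fun v hv =>
    mul_div_cancel_of_imp fun h0 =>
      (sum_eq_zero_iff_of_nonneg fun v _ => hπ.nonneg (x, v)).mp h0 v hv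
  refine isPlan_of_sum_of_nonneg (A := G.neighborFinset x) (B := G.neighborFinset y)
    (mu_le_one G le_rfl zero_le_one) (fun q => ?_) (fun q hq => zeroIdlePlan_eq_zero G hq)
    (fun u => ?_) (fun v => ?_)
  · unfold zeroIdlePlan
    split_ifs
    · exact div_nonneg (add_nonneg (hπ.nonneg q) (div_nonneg
        (mul_nonneg (hπ.nonneg _) (hπ.nonneg _)) hα0)) (by linarith)
    · exact le_rfl
  · by_cases hu : u ∈ G.neighborFinset x
    · rw [sum_congr rfl fun v hv => zeroIdlePlan_apply G hu hv, ← sum_div, sum_add_distrib,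
        ← sum_div, ← mul_sum, hπ.sum_neighborFinset_right, ← hα, hcancel_u u hu,
        mu_apply_of_ne G p ((G.mem_neighborFinset x u).mp hu).ne']
      field_simp [show (1 : ℝ) - p ≠ 0 by linarith]
      ring
    · rw [mu_zero_eq_zero_of_notMem G x hu]
      exact sum_eq_zero fun v _ => zeroIdlePlan_eq_zero G fun h => hu (mem_product.mp h).1
  · by_cases hv : v ∈ G.neighborFinset y
    · rw [sum_congr rfl fun u hu => zeroIdlePlan_apply G hu hv, ← sum_div, sum_add_distrib,
        ← hα, ← sum_div, ← sum_mul, hπ.sum_neighborFinset_left, hαy, mul_comm α, hcancel_v v hv,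
        mu_apply_of_ne G p ((G.mem_neighborFinset y v).mp hv).ne']
      field_simp [show (1 : ℝ) - p ≠ 0 by linarith]
      ring
    · rw [mu_zero_eq_zero_of_notMem G y hv]
      exact sum_eq_zero fun u _ => zeroIdlePlan_eq_zero G fun h => hv (mem_product.mp h).2

lemma IsPlan.cost_eq_add_sum_neighborFinset (hπ : IsPlan π (mu G x p) (mu G y p))
    (hxy : G.Adj x y) :
    cost G π = π (x, y) + ∑ v ∈ G.neighborFinset y, (G.dist x v : ℝ) * π (x, v) +
      ∑ u ∈ G.neighborFinset x, (G.dist u y : ℝ) * π (u, y) +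
      ∑ u ∈ G.neighborFinset x, ∑ v ∈ G.neighborFinset y, (G.dist u v : ℝ) * π (u, v) := by
  rw [cost_eq_sum G fun _ => hπ.eq_zero_of_notMem (support_mu_subset G x p)
    (support_mu_subset G y p), sum_product, closedNeighborFinset, closedNeighborFinset,
    sum_insert (G.notMem_neighborFinset_self x)]
  simp only [sum_insert (G.notMem_neighborFinset_self y), sum_add_distrib,
    SimpleGraph.dist_eq_one_iff_adj.mpr hxy]
  push_cast
  ring

lemma mul_cost_zeroIdlePlan (hp1 : p < 1) :
    (1 - p) * cost G (zeroIdlePlan G x y p π) =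
      ∑ u ∈ G.neighborFinset x, ∑ v ∈ G.neighborFinset y, (G.dist u v : ℝ) * π (u, v) +
      ∑ u ∈ G.neighborFinset x, ∑ v ∈ G.neighborFinset y, (G.dist u v : ℝ) *
        (π (u, y) * π (x, v) / ∑ v ∈ G.neighborFinset y, π (x, v)) := by
  rw [cost_eq_sum G fun q hq => zeroIdlePlan_eq_zero G hq, sum_product, mul_sum,
    ← sum_add_distrib]
  refine sum_congr rfl fun u hu => ?_
  rw [mul_sum, ← sum_add_distrib]
  refine sum_congr rfl fun v hv => ?_
  rw [zeroIdlePlan_apply G hu hv]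
  field_simp [show (1 : ℝ) - p ≠ 0 by linarith]

lemma mul_cost_zeroIdlePlan_le (hG : G.Connected) (hxy : G.Adj x y)
    (hπ : IsPlan π (mu G x p) (mu G y p)) (hp1 : p < 1)
    (hclean : ∀ u ∈ G.neighborFinset x ∩ G.neighborFinset y, π (u, y) = 0) :
    (1 - p) * cost G (zeroIdlePlan G x y p π) ≤ cost G π - p + 2 * π (y, y) := by
  set α := ∑ v ∈ G.neighborFinset y, π (x, v) with hα
  have hαx : α = p - π (x, y) := by rw [hα, hπ.sum_neighborFinset_right, mu_apply_self]
  have hαy : ∑ u ∈ G.neighborFinset x, π (u, y) = α := by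
    rw [hπ.sum_neighborFinset_left, mu_apply_self, hαx]
  have hcoupling := sum_sum_mul_div_le (c := fun u v => (G.dist u v : ℝ))
    (a := fun u => (G.dist u y : ℝ) - 1 + 2 * if u = y then 1 else 0)
    (b := fun v => (G.dist x v : ℝ)) (fun u _ => hπ.nonneg (u, y)) (fun v _ => hπ.nonneg (x, v))
    hαy hα.symm fun u hu v hv hne => dist_le_dist_sub_one_add hG
      ((G.mem_neighborFinset x u).mp hu) ((G.mem_neighborFinset y v).mp hv)
      fun h => hne (hclean u (mem_inter.mpr ⟨hu, (G.mem_neighborFinset y u).mpr h⟩))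
  have ha : ∑ u ∈ G.neighborFinset x, ((G.dist u y : ℝ) - 1 + 2 * if u = y then 1 else 0) *
      π (u, y) = ∑ u ∈ G.neighborFinset x, (G.dist u y : ℝ) * π (u, y) - α + 2 * π (y, y) := by
    simp [add_mul, sub_mul, sum_add_distrib, sum_sub_distrib, hαy, hxy]
  rw [mul_cost_zeroIdlePlan G hp1, hπ.cost_eq_add_sum_neighborFinset G hxy]
  linarith

end Surgery

section Main

variable {V : Type*} (G : SimpleGraph V) [G.LocallyFinite] {x y : V}

lemma W1_zero_le (hG : G.Connected) (hxy : G.Adj x y) (hd : G.degree y ≤ G.degree x) {p : ℝ}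
    (h0 : 0 ≤ p) (hp1 : p < 1) :
    W1 G (mu G x 0) (mu G y 0) ≤
      (W1 G (mu G x p) (mu G y p) - p) / (1 - p) + 2 / G.degree x := by
  obtain ⟨π, hπ, hcost, hclean⟩ :=
    exists_isPlan_cost_eq_W1_apply_common_eq_zero G hG hxy hd h0 hp1.le
  have hρ := mul_cost_zeroIdlePlan_le G hG hxy hπ hp1 hclean
  have hyy : π (y, y) ≤ (1 - p) / G.degree x := mu_apply_of_adj G p hxy ▸ hπ.le_left y y
  have hdx : (0 : ℝ) < G.degree x := by
    exact_mod_cast (G.degree_pos_iff_exists_adj x).mpr ⟨y, hxy⟩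
  calc W1 G (mu G x 0) (mu G y 0) ≤ cost G (zeroIdlePlan G x y p π) :=
        W1_le_cost G (isPlan_zeroIdlePlan G hπ hp1)
    _ ≤ (W1 G (mu G x p) (mu G y p) - p + 2 * ((1 - p) / G.degree x)) / (1 - p) := by
        rw [le_div_iff₀ (by linarith)]
        linarith
    _ = (W1 G (mu G x p) (mu G y p) - p) / (1 - p) + 2 / G.degree x := by
        field_simp [show (1 : ℝ) - p ≠ 0 by linarith]

lemma kappa_div_eq (hxy : G.Adj x y) {p : ℝ} (hp : 1 / 2 ≤ p) (hp1 : p < 1) :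
    kappa G p x y / (1 - p) =
      1 - (W1 G (mu G x (1 / 2)) (mu G y (1 / 2)) - 1 / 2) / (1 - 1 / 2) := by
  rw [← le_antisymm (W1_sub_div_le G hxy hp hp1 (by norm_num) (by norm_num))
    (W1_sub_div_le G hxy le_rfl (by norm_num) (by linarith) hp1), kappa]
  field_simp [show (1 : ℝ) - p ≠ 0 by linarith]
  ring

end Main

theorem stmt17 {V : Type*} (G : SimpleGraph V) [G.LocallyFinite] (hG : G.Connected)
    (x y : V) (hxy : G.Adj x y) (hd : G.degree y ≤ G.degree x) (K : ℝ)
    (hK : Filter.Tendsto (fun p => kappa G p x y / (1 - p)) (nhdsWithin 1 (Set.Iio 1)) (nhds K)) :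
    kappa G 0 x y ≤ K ∧ K ≤ kappa G 0 x y + 2 / (G.degree x : ℝ) := by
  have hlower := W1_sub_div_le G hxy (p := 1 / 2) (p' := 0) le_rfl (by norm_num) le_rfl one_pos
  have hupper := W1_zero_le G hG hxy hd (p := 1 / 2) (by norm_num) (by norm_num)
  rw [sub_zero, sub_zero, div_one] at hlower
  set c := (W1 G (mu G x (1 / 2)) (mu G y (1 / 2)) - 1 / 2) / (1 - 1 / 2)
  have hKc : K = 1 - c := by
    refine tendsto_nhds_unique hK (tendsto_const_nhds.congr' ?_)
    filter_upwards [Ioo_mem_nhdsLT (by norm_num : (1 / 2 : ℝ) < 1)] with p hp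
    exact (kappa_div_eq G hxy hp.1.le hp.2).symm
  rw [hKc, kappa]
  constructor <;> linarith
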